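/- arXiv:1810.06390 — 2 statements merged into one kernel-verified Lean document; each statement's English description precedes it below -/
import Mathlib

section
/- Let B ⊆ ℂⁿ (identified with ℝ^{2n}) be measurable with 0 < m(B) < ∞, and let B₀ ⊆ B be measurable with m(B₀) > 0. Then for every ε > 0 there exists w ∈ ℂⁿ such that m(B) < m(B ∪ (w + B₀)) < m(B) + ε. -/
/-!
Integrating the overlap `μ ((w + s) ∩ t)` over all translations `w` gives `μ s * μ t < ∞`, so
when `μ` has infinite total mass some translate `w₁ + s` sticks out of `t` in positive measure.
The excess `w ↦ μ ((w + s) \ t)` is continuous, because translation is continuous in measure; it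
vanishes at `w = 0` since `s ⊆ t`, so on the connected group it takes every value between `0` and
its value at `w₁`, in particular one in `(0, ε)`.
-/

open MeasureTheory Set Filter Topology
open scoped ENNReal symmDiff

namespace MeasureTheory

theorem tendsto_measure_of_tendsto_measure_symmDiff {α X : Type*} [MeasurableSpace X]
    {μ : Measure X} {l : Filter α} {u : α → Set X} {t : Set X} (ht : μ t ≠ ∞)
    (h : Tendsto (fun a ↦ μ (u a ∆ t)) l (𝓝 0)) : Tendsto (fun a ↦ μ (u a)) l (𝓝 (μ t)) := by
  rw [ENNReal.tendsto_nhds ht]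
  intro ε hε
  filter_upwards [ENNReal.tendsto_nhds_zero.1 h ε hε] with a ha
  constructor
  · rw [tsub_le_iff_tsub_le]
    exact le_measure_symmDiff.trans (symmDiff_comm t (u a) ▸ ha)
  · rw [← tsub_le_iff_left]
    exact le_measure_symmDiff.trans ha

variable {G : Type*} [MeasurableSpace G] [AddCommGroup G] {μ : Measure G} {s t : Set G}

theorem lintegral_measure_preimage_sub_right_inter [MeasurableAdd₂ G] [MeasurableNeg G]
    [SFinite μ] [μ.IsAddLeftInvariant] [μ.IsNegInvariant] (hs : MeasurableSet s) (t : Set G) :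
    ∫⁻ w, μ ((· - w) ⁻¹' s ∩ t) ∂μ = μ s * μ t := by
  have hind : Measurable (s.indicator (1 : G → ℝ≥0∞)) := measurable_one.indicator hs
  have hslice : ∀ w, μ ((· - w) ⁻¹' s ∩ t) = ∫⁻ z in t, s.indicator 1 (z - w) ∂μ := fun w ↦ by
    rw [← Measure.restrict_apply (hs.preimage (measurable_sub_const w)),
      ← lintegral_indicator_one (hs.preimage (measurable_sub_const w))]
    rfl
  calc ∫⁻ w, μ ((· - w) ⁻¹' s ∩ t) ∂μ
      = ∫⁻ z in t, ∫⁻ w, s.indicator 1 (z - w) ∂μ ∂μ := by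
        simp_rw [hslice]
        exact lintegral_lintegral_swap
          (hind.comp (measurable_snd.sub measurable_fst)).aemeasurable
    _ = ∫⁻ _ in t, μ s ∂μ := by
        simp_rw [(Measure.measurePreserving_sub_left μ _).lintegral_comp hind,
          lintegral_indicator_one hs]
    _ = μ s * μ t := by rw [setLIntegral_const]

theorem exists_measure_preimage_sub_right_sdiff_ne_zero [MeasurableAdd₂ G] [MeasurableNeg G]
    [SFinite μ] [μ.IsAddLeftInvariant] [μ.IsNegInvariant] (hμ : μ univ = ∞)
    (hs : MeasurableSet s) (hs₀ : μ s ≠ 0) (hs_fin : μ s ≠ ∞)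
    (ht_fin : μ t ≠ ∞) : ∃ w, μ ((· - w) ⁻¹' s \ t) ≠ 0 := by
  by_contra! h
  have hle : ∀ w, μ s ≤ μ ((· - w) ⁻¹' s ∩ t) := fun w ↦ by
    simpa [(measurePreserving_sub_right μ w).measure_preimage hs.nullMeasurableSet, h w] using
      measure_le_inter_add_sdiff μ ((· - w) ⁻¹' s) t
  have : ∞ ≤ μ s * μ t := calc
    ∞ = ∫⁻ _, μ s ∂μ := by rw [lintegral_const, hμ, ENNReal.mul_top hs₀]
    _ ≤ ∫⁻ w, μ ((· - w) ⁻¹' s ∩ t) ∂μ := lintegral_mono hle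
    _ = μ s * μ t := lintegral_measure_preimage_sub_right_inter hs t
  exact ENNReal.mul_ne_top hs_fin ht_fin (top_le_iff.1 this)

theorem continuous_measure_preimage_sub_right_sdiff [TopologicalSpace G] [IsTopologicalAddGroup G]
    [BorelSpace G] [R1Space G] [μ.InnerRegularCompactLTTop] [IsLocallyFiniteMeasure μ]
    [μ.IsAddRightInvariant] (hs : NullMeasurableSet s μ) (hs_fin : μ s ≠ ∞) (t : Set G) :
    Continuous fun w ↦ μ ((· - w) ⁻¹' s \ t) := by
  rw [continuous_iff_continuousAt]
  intro w₀
  let sub : C(G × G, G) := ⟨fun p ↦ p.2 - p.1, by fun_prop⟩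
  have hsymm := tendsto_measure_symmDiff_preimage_nhds_zero (sub.curry.continuous.tendsto w₀)
    (.of_forall fun w ↦ measurePreserving_sub_right μ w) (measurePreserving_sub_right μ w₀) hs
    hs_fin
  refine tendsto_measure_of_tendsto_measure_symmDiff ?_ <|
    tendsto_of_tendsto_of_tendsto_of_le_of_le tendsto_const_nhds hsymm (fun _ ↦ bot_le)
      fun w ↦ measure_mono ?_
  · refine ne_top_of_le_ne_top hs_fin ((measure_mono sdiff_subset).trans_eq ?_)
    exact (measurePreserving_sub_right μ w₀).measure_preimage hs
  · simp only [sdiff_eq, ← inter_symmDiff_distrib_right]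
    exact inter_subset_left

theorem exists_measure_lt_measure_union_preimage_sub_right_lt [TopologicalSpace G]
    [IsTopologicalAddGroup G] [BorelSpace G] [R1Space G] [PreconnectedSpace G]
    [MeasurableAdd₂ G] [MeasurableNeg G] [SFinite μ] [μ.InnerRegularCompactLTTop]
    [IsLocallyFiniteMeasure μ] [μ.IsAddLeftInvariant] [μ.IsNegInvariant]
    (hμ : μ univ = ∞) (hs : MeasurableSet s) (ht : MeasurableSet t) (hst : s ⊆ t)
    (hs₀ : μ s ≠ 0) (ht_fin : μ t ≠ ∞) {ε : ℝ≥0∞} (hε : ε ≠ 0) :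
    ∃ w, μ t < μ (t ∪ (· - w) ⁻¹' s) ∧ μ (t ∪ (· - w) ⁻¹' s) < μ t + ε := by
  have hs_fin : μ s ≠ ∞ := ne_top_of_le_ne_top ht_fin (measure_mono hst)
  obtain ⟨w₁, hw₁⟩ := exists_measure_preimage_sub_right_sdiff_ne_zero hμ hs hs₀ hs_fin ht_fin
  obtain ⟨c, hc₀, hc⟩ := exists_between (lt_min hε.bot_lt hw₁.bot_lt)
  have hf₀ : μ ((· - 0) ⁻¹' s \ t) = 0 := by simp [Set.sdiff_eq_empty.2 hst]
  obtain ⟨w, hw : μ ((· - w) ⁻¹' s \ t) = c⟩ := intermediate_value_univ 0 w₁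
    (continuous_measure_preimage_sub_right_sdiff hs.nullMeasurableSet hs_fin t)
    ⟨hf₀ ▸ hc₀.le, (hc.trans_le (min_le_right _ _)).le⟩
  refine ⟨w, ?_⟩
  rw [← union_sdiff_self, measure_union disjoint_sdiff_right
    ((hs.preimage (measurable_sub_const w)).diff ht), hw]
  exact ⟨ENNReal.lt_add_right ht_fin hc₀.ne',
    ENNReal.add_lt_add_left ht_fin (hc.trans_le (min_le_left _ _))⟩

end MeasureTheory

theorem amrein_berthier_translation_general (n : ℕ) (hn : 0 < n)
    (B B₀ : Set (Fin n → ℂ)) (hB : MeasurableSet B) (hB₀ : MeasurableSet B₀)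
    (hB₀B : B₀ ⊆ B) (hfin : volume B < ⊤) (h00 : 0 < volume B₀)
    (ε : ℝ) (hε : 0 < ε) :
    ∃ w : Fin n → ℂ,
      volume B < volume (B ∪ {z | z - w ∈ B₀}) ∧
      volume (B ∪ {z | z - w ∈ B₀}) < volume B + ENNReal.ofReal ε := by
  have : NeZero n := ⟨hn.ne'⟩
  exact exists_measure_lt_measure_union_preimage_sub_right_lt
    (measure_univ_of_isAddLeftInvariant volume) hB₀ hB hB₀B h00.ne' hfin.ne
    (ENNReal.ofReal_pos.2 hε).ne'

/-- Amrein–Berthier translation lemma: if `B ⊆ ℂⁿ ≅ ℝ^{2n}` is measurable with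
`0 < m(B) < ∞` and `B₀ ⊆ B` has positive measure, then for every `ε > 0` there
is a translate `w + B₀` with `m(B) < m(B ∪ (w + B₀)) < m(B) + ε`. -/
theorem amrein_berthier_translation (n : ℕ) (hn : 0 < n)
    (B B₀ : Set (Fin n → ℂ)) (hB : MeasurableSet B) (hB₀ : MeasurableSet B₀)
    (hB₀B : B₀ ⊆ B) (h0 : 0 < volume B) (hfin : volume B < ⊤) (h00 : 0 < volume B₀)
    (ε : ℝ) (hε : 0 < ε) :
    ∃ w : Fin n → ℂ,
      volume B < volume (B ∪ {z | z - w ∈ B₀}) ∧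
      volume (B ∪ {z | z - w ∈ B₀}) < volume B + ENNReal.ofReal ε :=
  amrein_berthier_translation_general n hn B B₀ hB hB₀ hB₀B hfin h00 ε hε
end

section
/- Let E and F be orthogonal projections on a Hilbert space H, and let E ∩ F denote the orthogonal projection onto Range(E) ∩ Range(F). If EF is Hilbert–Schmidt, then Range(E) ∩ Range(F) is finite-dimensional with dim(Range(E) ∩ Range(F)) = ‖E ∩ F‖²_{HS} ≤ ‖EF‖²_{HS}. -/
/-!
Write `E`, `F`, `G` as the orthogonal projections `P_U`, `P_V`, `P_{U ⊓ V}`. Since `U ⊓ V` lies in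
both `U` and `V`, `P_{U ⊓ V} = P_{U ⊓ V} P_V P_U`, and `P_{U ⊓ V}` is a contraction, so
`‖P_{U ⊓ V}‖_HS ≤ ‖P_V P_U‖_HS = ‖(P_U P_V)*‖_HS = ‖P_U P_V‖_HS`. On the other hand, the Hilbert–Schmidt
norm of `P_K` equals that of its adjoint, the inclusion `K → H`; computed in a Hilbert basis of `K`
it is the cardinality of that basis, which is therefore finite.
-/

open ENNReal

section HilbertSchmidt

open ContinuousLinearMap

variable {𝕜 E F G : Type*} [RCLike 𝕜]
  [NormedAddCommGroup E] [InnerProductSpace 𝕜 E]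
  [NormedAddCommGroup F] [InnerProductSpace 𝕜 F]
  [NormedAddCommGroup G] [InnerProductSpace 𝕜 G]
  {ι κ : Type*}

lemma HilbertBasis.tsum_nnnorm_inner_sq (b : HilbertBasis ι 𝕜 E) (x : E) :
    ∑' i, (‖inner 𝕜 (b i) x‖₊ : ℝ≥0∞) ^ 2 = (‖x‖₊ : ℝ≥0∞) ^ 2 := by
  have hre := RCLike.hasSum_re 𝕜 (b.hasSum_inner_mul_inner x x)
  have hnn : HasSum (fun i => ‖inner 𝕜 (b i) x‖₊ ^ 2) (‖x‖₊ ^ 2) := by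
    refine NNReal.hasSum_coe.mp ?_
    convert hre using 1
    · ext i
      rw [← inner_conj_symm x, RCLike.conj_mul, ← RCLike.ofReal_pow, RCLike.ofReal_re]
      rfl
    · rw [inner_self_eq_norm_sq]
      rfl
  exact_mod_cast (ENNReal.hasSum_coe.mpr hnn).tsum_eq

lemma Submodule.completeSpace_of_hasOrthogonalProjection [CompleteSpace E] (K : Submodule 𝕜 E)
    [K.HasOrthogonalProjection] : CompleteSpace K :=
  K.orthogonal_orthogonal ▸ inferInstance

/-- Equal to `⊤` exactly when `T` is not Hilbert–Schmidt; by `hilbertSchmidtNormSq_adjoint` it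
does not depend on the Hilbert basis `b`. -/
noncomputable def hilbertSchmidtNormSq (b : HilbertBasis ι 𝕜 E) (T : E →L[𝕜] F) : ℝ≥0∞ :=
  ∑' i, (‖T (b i)‖₊ : ℝ≥0∞) ^ 2

lemma hilbertSchmidtNormSq_adjoint [CompleteSpace E] [CompleteSpace F]
    (b : HilbertBasis ι 𝕜 E) (c : HilbertBasis κ 𝕜 F) (T : E →L[𝕜] F) :
    hilbertSchmidtNormSq c (adjoint T) = hilbertSchmidtNormSq b T := by
  unfold hilbertSchmidtNormSq
  simp_rw [← b.tsum_nnnorm_inner_sq, ← c.tsum_nnnorm_inner_sq, adjoint_inner_right]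
  rw [ENNReal.tsum_comm]
  simp_rw [← inner_conj_symm (T _), RCLike.nnnorm_conj]

lemma hilbertSchmidtNormSq_comp_le (b : HilbertBasis ι 𝕜 E) (S : F →L[𝕜] G) (T : E →L[𝕜] F) :
    hilbertSchmidtNormSq b (S ∘L T) ≤ (‖S‖₊ : ℝ≥0∞) ^ 2 * hilbertSchmidtNormSq b T := by
  unfold hilbertSchmidtNormSq
  rw [← ENNReal.tsum_mul_left]
  refine ENNReal.tsum_le_tsum fun i => ?_
  rw [← mul_pow]
  gcongr
  exact_mod_cast S.le_opNNNorm (T (b i))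

lemma hilbertSchmidtNormSq_starProjection [CompleteSpace E] (b : HilbertBasis ι 𝕜 E)
    (K : Submodule 𝕜 E) [CompleteSpace K] (c : HilbertBasis κ 𝕜 K) :
    hilbertSchmidtNormSq b K.starProjection = ENat.card κ := by
  calc hilbertSchmidtNormSq b K.starProjection
      = hilbertSchmidtNormSq b K.orthogonalProjectionOnto := rfl
    _ = hilbertSchmidtNormSq c K.subtypeL := by
      rw [← K.adjoint_orthogonalProjectionOnto, hilbertSchmidtNormSq_adjoint b]
    _ = ENat.card κ := by
      have hc : ∀ j, ‖(c j : E)‖₊ = 1 := fun j => NNReal.eq (c.orthonormal.norm_eq_one j)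
      simp [hilbertSchmidtNormSq, hc]

lemma Submodule.finiteDimensional_and_finrank_eq_hilbertSchmidtNormSq [CompleteSpace E]
    (b : HilbertBasis ι 𝕜 E) (K : Submodule 𝕜 E) [K.HasOrthogonalProjection]
    (h : hilbertSchmidtNormSq b K.starProjection < ⊤) :
    FiniteDimensional 𝕜 K ∧
      (Module.finrank 𝕜 K : ℝ≥0∞) = hilbertSchmidtNormSq b K.starProjection := by
  have := K.completeSpace_of_hasOrthogonalProjection
  obtain ⟨w, c, -⟩ := exists_hilbertBasis 𝕜 K
  rw [hilbertSchmidtNormSq_starProjection b K c] at h ⊢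
  have : Fintype w := @Fintype.ofFinite w (ENat.card_lt_top.mp (ENat.toENNReal_lt_top.mp h))
  let B := c.toOrthonormalBasis.toBasis
  refine ⟨B.finiteDimensional_of_finite, ?_⟩
  rw [Module.finrank_eq_card_basis B, ENat.card_eq_coe_fintype_card]
  rfl

lemma Submodule.starProjection_inf_eq_comp (U V : Submodule 𝕜 E) [U.HasOrthogonalProjection]
    [V.HasOrthogonalProjection] [(U ⊓ V).HasOrthogonalProjection] :
    (U ⊓ V).starProjection = (U ⊓ V).starProjection ∘L V.starProjection ∘L U.starProjection := by
  rw [← comp_assoc, starProjection_comp_starProjection_of_le inf_le_right,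
    starProjection_comp_starProjection_of_le inf_le_left]

lemma hilbertSchmidtNormSq_starProjection_inf_le [CompleteSpace E] (b : HilbertBasis ι 𝕜 E)
    (U V : Submodule 𝕜 E) [U.HasOrthogonalProjection] [V.HasOrthogonalProjection]
    [(U ⊓ V).HasOrthogonalProjection] :
    hilbertSchmidtNormSq b (U ⊓ V).starProjection ≤
      hilbertSchmidtNormSq b (U.starProjection ∘L V.starProjection) :=
  calc hilbertSchmidtNormSq b (U ⊓ V).starProjection
      = hilbertSchmidtNormSq b ((U ⊓ V).starProjection ∘L V.starProjection ∘L U.starProjection) := by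
        rw [← U.starProjection_inf_eq_comp V]
    _ ≤ (‖(U ⊓ V).starProjection‖₊ : ℝ≥0∞) ^ 2 *
          hilbertSchmidtNormSq b (V.starProjection ∘L U.starProjection) :=
        hilbertSchmidtNormSq_comp_le b _ _
    _ ≤ hilbertSchmidtNormSq b (V.starProjection ∘L U.starProjection) := by
        refine mul_le_of_le_one_left zero_le (pow_le_one₀ zero_le ?_)
        exact_mod_cast (U ⊓ V).starProjection_norm_le
    _ = hilbertSchmidtNormSq b (U.starProjection ∘L V.starProjection) := by
        rw [← hilbertSchmidtNormSq_adjoint b b, adjoint_comp,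
          (isSelfAdjoint_starProjection U).adjoint_eq, (isSelfAdjoint_starProjection V).adjoint_eq]

end HilbertSchmidt

/-- if `E, F` are orthogonal projections on a Hilbert space `H`
and `E ∩ F` (here `G`) denotes the orthogonal projection onto
`Range(E) ∩ Range(F)`, and `EF` is Hilbert–Schmidt, then `Range(E) ∩ Range(F)`
is finite dimensional and
`dim(Range(E) ∩ Range(F)) = ‖E ∩ F‖²_{HS} ≤ ‖EF‖²_{HS}`
(Hilbert–Schmidt norms computed via a Hilbert basis `b`). -/
theorem proj_inter_hilbertSchmidt {H : Type*} [NormedAddCommGroup H]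
    [InnerProductSpace ℂ H] [CompleteSpace H]
    (E F G : H →L[ℂ] H)
    (hE : E.comp E = E) (hE' : IsSelfAdjoint E)
    (hF : F.comp F = F) (hF' : IsSelfAdjoint F)
    (hG : G.comp G = G) (hG' : IsSelfAdjoint G)
    (hGrange : LinearMap.range (G : H →ₗ[ℂ] H) = LinearMap.range (E : H →ₗ[ℂ] H) ⊓ LinearMap.range (F : H →ₗ[ℂ] H))
    {ι : Type*} (b : HilbertBasis ι ℂ H)
    (hHS : ∑' i : ι, (‖(E.comp F) (b i)‖₊ : ℝ≥0∞) ^ 2 < ⊤) :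
    FiniteDimensional ℂ ↥(LinearMap.range (E : H →ₗ[ℂ] H) ⊓ LinearMap.range (F : H →ₗ[ℂ] H)) ∧
    (Module.finrank ℂ ↥(LinearMap.range (E : H →ₗ[ℂ] H) ⊓ LinearMap.range (F : H →ₗ[ℂ] H)) : ℝ≥0∞) =
      ∑' i : ι, (‖G (b i)‖₊ : ℝ≥0∞) ^ 2 ∧
    ∑' i : ι, (‖G (b i)‖₊ : ℝ≥0∞) ^ 2 ≤
      ∑' i : ι, (‖(E.comp F) (b i)‖₊ : ℝ≥0∞) ^ 2 := by
  obtain ⟨U, _, rfl⟩ := isStarProjection_iff_eq_starProjection.mp ⟨hE, hE'⟩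
  obtain ⟨V, _, rfl⟩ := isStarProjection_iff_eq_starProjection.mp ⟨hF, hF'⟩
  obtain ⟨W, _, rfl⟩ := isStarProjection_iff_eq_starProjection.mp ⟨hG, hG'⟩
  simp only [Submodule.range_starProjection] at hGrange
  rw [Submodule.range_starProjection U, Submodule.range_starProjection V]
  subst hGrange
  have hle := hilbertSchmidtNormSq_starProjection_inf_le b U V
  obtain ⟨hfin, hrank⟩ :=
    (U ⊓ V).finiteDimensional_and_finrank_eq_hilbertSchmidtNormSq b (hle.trans_lt hHS)
  exact ⟨hfin, hrank, hle⟩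
end
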